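/- Let (R, m) be a complete Noetherian local ring and let 0 → A₁ → A → A₂ → 0 be a short exact sequence of Artinian R-modules each satisfying dim R/Ann_R(−) ≤ 1. Then r(A₁) ≤ r(A) and r(A₂) ≤ r(A). -/

import Mathlib

open IsLocalRing

/-- The length `ℓ_R(M)` of an `R`-module `M`, defined as the Krull dimension of its lattice of
submodules (the supremum of lengths of chains of submodules). -/
noncomputable def moduleLength (R M : Type) [CommRing R] [AddCommGroup M] [Module R M] : ℕ∞ :=
  WithBot.unbotD 0 (Order.krullDim (Submodule R M))

/-- `v(M) = ℓ_R(M / mM)`, the minimal number of generators of `M` (by Nakayama's lemma),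
where `m` is a given ideal of `R` (in applications, the maximal ideal of a local ring). -/
noncomputable def numGen (R : Type) [CommRing R] (m : Ideal R) (M : Type) [AddCommGroup M]
    [Module R M] : ℕ∞ :=
  moduleLength R (M ⧸ (m • (⊤ : Submodule R M)))

/-- `c(M) = sup { v(N) | N an R-submodule of M }`. -/
noncomputable def cInv (R : Type) [CommRing R] (m : Ideal R) (M : Type) [AddCommGroup M]
    [Module R M] : ℕ∞ :=
  ⨆ N : Submodule R M, numGen R m N

/-- The colon submodule `(N :_M I) = { x ∈ M | I • x ⊆ N }`. -/
def colonSub {R M : Type} [CommRing R] [AddCommGroup M] [Module R M] (N : Submodule R M)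
    (I : Ideal R) : Submodule R M where
  carrier := { x | ∀ r ∈ I, r • x ∈ N }
  add_mem' := by
    intro a b ha hb r hr
    simpa [smul_add] using N.add_mem (ha r hr) (hb r hr)
  zero_mem' := by
    intro r hr
    simp
  smul_mem' := by
    intro c x hx r hr
    rw [smul_comm]
    exact N.smul_mem c (hx r hr)

/-- `ℓ_R((N :_M m)/N)`, the length of the quotient of the colon submodule `(N :_M m)` by `N`. -/
noncomputable def colonQuotLen (R : Type) [CommRing R] (m : Ideal R) (M : Type) [AddCommGroup M]
    [Module R M] (N : Submodule R M) : ℕ∞ :=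
  moduleLength R (↥(colonSub N m) ⧸ Submodule.comap (colonSub N m).subtype N)

/-- `r(A) = sup { ℓ_R((B :_A m)/B) | B an R-submodule of A }`. -/
noncomputable def rInv (R : Type) [CommRing R] (m : Ideal R) (A : Type) [AddCommGroup A]
    [Module R A] : ℕ∞ :=
  ⨆ B : Submodule R A, colonQuotLen R m A B

/-- `dim_{R/m} Soc(N)` where `Soc(N) = (0 :_N m)`; since the socle is killed by `m`, this
dimension equals its length as an `R`-module. -/
noncomputable def socDim (R : Type) [CommRing R] (m : Ideal R) (N : Type) [AddCommGroup N]
    [Module R N] : ℕ∞ :=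
  moduleLength R (colonSub (⊥ : Submodule R N) m)

lemma moduleLength_le_of_injective {R M M' : Type} [CommRing R] [AddCommGroup M] [Module R M]
    [AddCommGroup M'] [Module R M'] (f : M →ₗ[R] M') (hf : Function.Injective f) :
    moduleLength R M ≤ moduleLength R M' := by
  have hsm : StrictMono (Submodule.map f) := fun p q hpq =>
    lt_of_le_of_ne (Submodule.map_mono hpq.le)
      (fun h => hpq.ne (Submodule.map_injective_of_injective hf h))
  have := Order.krullDim_le_of_strictMono _ hsm
  unfold moduleLength
  rcases hb : Order.krullDim (Submodule R M') with _ | b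
  · rw [hb] at this
    simp [le_bot_iff.mp this]
  · rcases ha : Order.krullDim (Submodule R M) with _ | a
    · show WithBot.unbotD 0 ⊥ ≤ WithBot.unbotD 0 (b : WithBot ℕ∞)
      rw [WithBot.unbotD_bot, WithBot.unbotD_coe]
      exact zero_le
    · rw [ha, hb] at this
      exact WithBot.coe_le_coe.mp this

lemma moduleLength_le_of_surjective {R M M' : Type} [CommRing R] [AddCommGroup M] [Module R M]
    [AddCommGroup M'] [Module R M'] (f : M →ₗ[R] M') (hf : Function.Surjective f) :
    moduleLength R M' ≤ moduleLength R M := by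
  have hsm : StrictMono (Submodule.comap f) := fun p q hpq =>
    lt_of_le_of_ne (Submodule.comap_mono hpq.le)
      (fun h => hpq.ne (Submodule.comap_injective_of_surjective hf h))
  have := Order.krullDim_le_of_strictMono _ hsm
  unfold moduleLength
  rcases hb : Order.krullDim (Submodule R M) with _ | b
  · rw [hb] at this
    simp [le_bot_iff.mp this]
  · rcases ha : Order.krullDim (Submodule R M') with _ | a
    · show WithBot.unbotD 0 ⊥ ≤ WithBot.unbotD 0 (b : WithBot ℕ∞)
      rw [WithBot.unbotD_bot, WithBot.unbotD_coe]
      exact zero_le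
    · rw [ha, hb] at this
      exact WithBot.coe_le_coe.mp this



variable {R M M' : Type} [CommRing R] [AddCommGroup M] [Module R M]
    [AddCommGroup M'] [Module R M'] (m : Ideal R)

lemma mem_colonSub {N : Submodule R M} {I : Ideal R} {x : M} :
    x ∈ colonSub N I ↔ ∀ r ∈ I, r • x ∈ N := Iff.rfl

lemma colonQuotLen_map_le (f : M →ₗ[R] M') (hf : Function.Injective f) (B : Submodule R M) :
    colonQuotLen R m M B ≤ colonQuotLen R m M' (B.map f) := by
  set C := colonSub B m
  set C' := colonSub (B.map f) m
  have hφmem : ∀ c : ↥C, f c.1 ∈ C' := by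
    intro c
    rw [mem_colonSub]
    intro r hr
    rw [← map_smul]
    exact Submodule.mem_map_of_mem (c.2 r hr)
  set φ : ↥C →ₗ[R] ↥C' := LinearMap.codRestrict C' (f ∘ₗ C.subtype) hφmem with hφ
  set N := Submodule.comap C.subtype B
  set N' := Submodule.comap C'.subtype (B.map f)
  have hle : N ≤ N'.comap φ := by
    intro c hc
    exact Submodule.mem_map_of_mem hc
  set ψ := Submodule.mapQ N N' φ hle with hψ
  have hinj : Function.Injective ψ := by
    rw [← LinearMap.ker_eq_bot, eq_bot_iff]
    intro x hx
    obtain ⟨c, rfl⟩ := Submodule.Quotient.mk_surjective N x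
    rw [LinearMap.mem_ker, hψ, Submodule.mapQ_apply, Submodule.Quotient.mk_eq_zero] at hx
    obtain ⟨b, hb, hbe⟩ := hx
    rw [Submodule.mem_bot, Submodule.Quotient.mk_eq_zero]
    have heq : b = c.1 := hf hbe
    show c.1 ∈ B
    exact heq ▸ hb
  exact moduleLength_le_of_injective ψ hinj

lemma colonQuotLen_comap_le (g : M →ₗ[R] M') (hg : Function.Surjective g) (B : Submodule R M') :
    colonQuotLen R m M' B ≤ colonQuotLen R m M (B.comap g) := by
  set C := colonSub (B.comap g) m
  set C' := colonSub B m
  have hφmem : ∀ c : ↥C, g c.1 ∈ C' := by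
    intro c
    rw [mem_colonSub]
    intro r hr
    rw [← map_smul]
    exact c.2 r hr
  set φ : ↥C →ₗ[R] ↥C' := LinearMap.codRestrict C' (g ∘ₗ C.subtype) hφmem with hφ
  have hφsurj : Function.Surjective φ := by
    rintro ⟨y, hy⟩
    obtain ⟨x, rfl⟩ := hg y
    have hx : x ∈ C := by
      rw [mem_colonSub]
      intro r hr
      show g (r • x) ∈ B
      rw [map_smul]
      exact hy r hr
    exact ⟨⟨x, hx⟩, rfl⟩
  set N := Submodule.comap C.subtype (B.comap g)
  set N' := Submodule.comap C'.subtype B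
  have hle : N ≤ N'.comap φ := fun c hc => hc
  set ψ := Submodule.mapQ N N' φ hle with hψ
  have hsurj : Function.Surjective ψ := by
    intro y
    obtain ⟨d, rfl⟩ := Submodule.Quotient.mk_surjective N' y
    obtain ⟨c, hc⟩ := hφsurj d
    exact ⟨Submodule.Quotient.mk c, by rw [hψ, Submodule.mapQ_apply, hc]⟩
  exact moduleLength_le_of_surjective ψ hsurj


/-- For a short exact sequence `0 → A₁ → A → A₂ → 0` of Artinian modules with
`dim R/Ann_R(−) ≤ 1` over a complete Noetherian local ring `(R, m)`, one has
`r(A₁) ≤ r(A)` and `r(A₂) ≤ r(A)`. -/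
theorem stmt_10 (R : Type) [CommRing R] [IsNoetherianRing R] [IsLocalRing R]
    [IsAdicComplete (maximalIdeal R) R]
    (A₁ A A₂ : Type) [AddCommGroup A₁] [Module R A₁] [AddCommGroup A] [Module R A]
    [AddCommGroup A₂] [Module R A₂]
    [IsArtinian R A₁] [IsArtinian R A] [IsArtinian R A₂]
    (h₁ : ringKrullDim (R ⧸ Module.annihilator R A₁) ≤ 1)
    (h : ringKrullDim (R ⧸ Module.annihilator R A) ≤ 1)
    (h₂ : ringKrullDim (R ⧸ Module.annihilator R A₂) ≤ 1)
    (f : A₁ →ₗ[R] A) (g : A →ₗ[R] A₂)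
    (hf : Function.Injective f) (hg : Function.Surjective g) (hfg : Function.Exact f g) :
    rInv R (maximalIdeal R) A₁ ≤ rInv R (maximalIdeal R) A ∧
      rInv R (maximalIdeal R) A₂ ≤ rInv R (maximalIdeal R) A := by

  constructor
  · refine iSup_le fun B => ?_
    exact le_trans (colonQuotLen_map_le (maximalIdeal R) f hf B)
      (le_iSup (fun C => colonQuotLen R (maximalIdeal R) A C) (B.map f))
  · refine iSup_le fun B => ?_
    exact le_trans (colonQuotLen_comap_le (maximalIdeal R) g hg B)
      (le_iSup (fun C => colonQuotLen R (maximalIdeal R) A C) (B.comap g))
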